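/- For α < 1/2, p ≥ 1, t > 0, and either initial point x ∈ {-1,1}, the p-th moment of δ(t) := e^{-t} x Y / ((1-e^{-t})(2α-1)Y + 1 + e^{-t} x Y) under Y ∼ p_t(x,·) satisfies ∑_{y∈{-1,1}} p_t(x,y) |δ(t)(y)|^p ≤ (2α)^{1-p} e^{-tp} (1-e^{-t})^{1-p}. -/

import Mathlib

/-!
Since `|x| = |y| = 1`, each summand is `p_t(x,y) (e^{-t}/(2 p_t(x,y)))^p = (e^{-t}/2)^p p_t(x,y)^{1-p}`,
which decreases in `p_t(x,y)` because `p ≥ 1`. The two values of the kernel,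
`α (1 - e^{-t}) + e^{-t} (1 + x) / 2` and `(1 - α) (1 - e^{-t}) + e^{-t} (1 - x) / 2`, are at least
`α (1 - e^{-t})` when `α ≤ 1/2`, so each of the two summands is at most `(e^{-t}/2)^p (α (1 - e^{-t}))^{1-p}`.
-/

/-- the one-dimensional biased heat kernel. -/
noncomputable def heatKer (α t x y : ℝ) : ℝ :=
  (1 - Real.exp (-t)) / 2 * (2 * α - 1) * y + (1 + Real.exp (-t) * x * y) / 2

/-- `δ(t)(y) := e^{-t} x y / (2 p_t(x,y))`. -/
noncomputable def deltaCoef (α t x y : ℝ) : ℝ :=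
  Real.exp (-t) * x * y / (2 * heatKer α t x y)

open Real

lemma mul_div_rpow_eq {c h : ℝ} (p : ℝ) (hc : 0 ≤ c) (hh : 0 < h) :
    h * (c / h) ^ p = c ^ p * h ^ (1 - p) := by
  rw [div_rpow hc hh.le, rpow_sub hh, rpow_one]
  field_simp

lemma mul_div_rpow_le_of_le {c h m p : ℝ} (hc : 0 ≤ c) (hm : 0 < m) (hmh : m ≤ h) (hp : 1 ≤ p) :
    h * (c / h) ^ p ≤ m * (c / m) ^ p := by
  rw [mul_div_rpow_eq p hc (hm.trans_le hmh), mul_div_rpow_eq p hc hm]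
  exact mul_le_mul_of_nonneg_left (rpow_le_rpow_of_nonpos hm hmh (by linarith)) (by positivity)

lemma le_heatKer {α t x y : ℝ} (hα : α ≤ 1 / 2) (ht : 0 ≤ t) (hx : |x| ≤ 1)
    (hy : y = 1 ∨ y = -1) : α * (1 - exp (-t)) ≤ heatKer α t x y := by
  have he0 : 0 < exp (-t) := exp_pos _
  have he1 : exp (-t) ≤ 1 := exp_le_one_iff.mpr (by linarith)
  obtain ⟨hx₁, hx₂⟩ := abs_le.mp hx
  rcases hy with rfl | rfl <;> unfold heatKer <;> nlinarith

lemma abs_deltaCoef {α t x y : ℝ} (hx : |x| = 1) (hy : |y| = 1) (hk : 0 < heatKer α t x y) :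
    |deltaCoef α t x y| = exp (-t) / 2 / heatKer α t x y := by
  rw [deltaCoef, abs_div, abs_mul, abs_mul, hx, hy, abs_of_pos (exp_pos _),
    abs_of_pos (by positivity), div_div]
  ring

lemma heatKer_mul_abs_deltaCoef_rpow_le {α t p x y : ℝ} (hα : α ∈ Set.Ioo (0 : ℝ) (1 / 2))
    (ht : 0 < t) (hp : 1 ≤ p) (hx : x = 1 ∨ x = -1) (hy : y = 1 ∨ y = -1) :
    heatKer α t x y * |deltaCoef α t x y| ^ p
      ≤ α * (1 - exp (-t)) * (exp (-t) / 2 / (α * (1 - exp (-t)))) ^ p := by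
  have hm : 0 < α * (1 - exp (-t)) :=
    mul_pos hα.1 (sub_pos.mpr (exp_lt_one_iff.mpr (neg_lt_zero.mpr ht)))
  have habs : ∀ z : ℝ, z = 1 ∨ z = -1 → |z| = 1 := by rintro z (rfl | rfl) <;> simp
  have hk := le_heatKer hα.2.le ht.le (habs x hx).le hy
  rw [abs_deltaCoef (habs x hx) (habs y hy) (hm.trans_le hk)]
  exact mul_div_rpow_le_of_le (by positivity) hm hk hp

lemma two_mul_mul_div_rpow_eq {α e : ℝ} (p : ℝ) (hα : 0 < α) (he : 0 ≤ e) (he1 : e < 1) :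
    2 * (α * (1 - e) * (e / 2 / (α * (1 - e))) ^ p)
      = (2 * α) ^ (1 - p) * e ^ p * (1 - e) ^ (1 - p) := by
  have h1e : 0 < 1 - e := by linarith
  rw [mul_div_rpow_eq p (by positivity) (by positivity), div_rpow he zero_le_two,
    mul_rpow hα.le h1e.le, mul_rpow zero_le_two hα.le, rpow_sub zero_lt_two, rpow_one]
  field_simp

/-- uniform `p`-th moment bound on `δ(t)` for `α < 1/2`. -/
theorem delta_moment_bound (α t p x : ℝ)
    (hα : α ∈ Set.Ioo (0:ℝ) (1/2)) (ht : 0 < t) (hp : 1 ≤ p)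
    (hx : x = 1 ∨ x = -1) :
    heatKer α t x 1 * |deltaCoef α t x 1| ^ p
      + heatKer α t x (-1) * |deltaCoef α t x (-1)| ^ p
      ≤ (2 * α) ^ (1 - p) * Real.exp (-t * p) * (1 - Real.exp (-t)) ^ (1 - p) := by
  have hpos := heatKer_mul_abs_deltaCoef_rpow_le hα ht hp hx (Or.inl rfl)
  have hneg := heatKer_mul_abs_deltaCoef_rpow_le hα ht hp hx (Or.inr rfl)
  rw [exp_mul, ← two_mul_mul_div_rpow_eq p hα.1 (exp_pos _).le (exp_lt_one_iff.mpr (by linarith))]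
  linarith
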